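/- arXiv:2412.03770 — 2 statements merged into one kernel-verified Lean document; each statement's English description precedes it below -/
import Mathlib

section
/- Let $q < 1$ and let $m$ be the smallest natural number with $m(1-q) \ge q$. Define $g(a) = \frac{a^{1-q}-1}{a-1}$ for $a > 1$. Then for all $a$ with $1 < a < 2$, one has $g(a) \ge \frac{1}{m \cdot 2^{\max(q,0)} + 1}$. -/
/-- For `q < 1`, `m` the smallest natural number with `m(1-q) ≥ q`, and `1 < a < 2`,
one has `g(a) = (a^(1-q)-1)/(a-1) ≥ 1/(m·2^(max q 0) + 1)`. -/
theorem stmt_3 (q : ℝ) (hq : q < 1) (m : ℕ)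
    (hm : q ≤ (m : ℝ) * (1 - q))
    (hmin : ∀ m' : ℕ, q ≤ (m' : ℝ) * (1 - q) → m ≤ m')
    (a : ℝ) (ha₁ : 1 < a) (ha₂ : a < 2) :
    1 / ((m : ℝ) * 2 ^ (max q 0) + 1) ≤ (a ^ (1 - q) - 1) / (a - 1) := by
  have ha0 : (0:ℝ) < a := by linarith
  have hx : 1 < a ^ (1 - q) := Real.one_lt_rpow_iff_of_pos ha0 |>.2 (Or.inl ⟨ha₁, by linarith⟩)
  set B : ℝ := 2 ^ (max q 0) with hB
  have hB1 : (1:ℝ) ≤ B := Real.one_le_rpow (by norm_num) (le_max_right _ _)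
  have hC : (0:ℝ) < (m : ℝ) * B + 1 := by positivity
  -- the sum
  set S : ℝ := ∑ i ∈ Finset.range m, a ^ (q - (i:ℝ) * (1 - q)) with hS
  have key : (a ^ (1 - q) - 1) * S = a - a ^ (1 - (m:ℝ) * (1 - q)) := by
    have : ∀ i ∈ Finset.range m, (a ^ (1 - q) - 1) * a ^ (q - (i:ℝ) * (1 - q))
        = a ^ (1 - (i:ℝ) * (1 - q)) - a ^ (1 - ((i:ℝ)+1) * (1 - q)) := by
      intro i _
      have h1 : a ^ (1 - q) * a ^ (q - (i:ℝ)*(1-q)) = a ^ (1 - (i:ℝ)*(1-q)) := by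
        rw [← Real.rpow_add ha0]; ring_nf
      have h2 : a ^ (q - (i:ℝ)*(1-q)) = a ^ (1 - ((i:ℝ)+1)*(1-q)) := by
        ring_nf
      rw [sub_mul, one_mul, h1, h2]
    rw [hS, Finset.mul_sum, Finset.sum_congr rfl this]
    have := Finset.sum_range_sub' (fun i : ℕ => a ^ (1 - (i:ℝ) * (1 - q))) m
    simp only [Nat.cast_add, Nat.cast_one] at this ⊢
    rw [this]
    norm_num
  have hSle : S ≤ (m:ℝ) * B := by
    rw [hS]
    calc (∑ i ∈ Finset.range m, a ^ (q - (i:ℝ) * (1 - q)))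
        ≤ ∑ _i ∈ Finset.range m, B := by
          apply Finset.sum_le_sum
          intro i _
          have h1 : a ^ (q - (i:ℝ) * (1 - q)) ≤ a ^ q := by
            apply Real.rpow_le_rpow_of_exponent_le ha₁.le
            have : (0:ℝ) ≤ (i:ℝ) * (1 - q) := mul_nonneg (Nat.cast_nonneg _) (by linarith)
            linarith
          refine h1.trans ?_
          rcases le_or_gt 0 q with h | h
          · rw [hB, max_eq_left h]
            exact Real.rpow_le_rpow ha0.le ha₂.le h
          · rw [hB, max_eq_right h.le, Real.rpow_zero]
            exact Real.rpow_le_one_of_one_le_of_nonpos ha₁.le h.le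
      _ = (m:ℝ) * B := by rw [Finset.sum_const, Finset.card_range, nsmul_eq_mul]
  have hmono : a ^ (1 - (m:ℝ) * (1 - q)) ≤ a ^ (1 - q) :=
    Real.rpow_le_rpow_of_exponent_le ha₁.le (by linarith)
  have main : a - 1 ≤ (a ^ (1 - q) - 1) * ((m:ℝ) * B + 1) := by
    have h1 : a - 1 ≤ (a ^ (1 - q) - 1) * (S + 1) := by
      have : (a ^ (1 - q) - 1) * (S + 1)
          = (a - a ^ (1 - (m:ℝ) * (1 - q))) + (a ^ (1 - q) - 1) := by
        rw [mul_add, key, mul_one]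
      linarith
    refine h1.trans ?_
    apply mul_le_mul_of_nonneg_left (by linarith) (by linarith)
  rw [div_le_div_iff₀ hC (by linarith)]
  linarith
end

section
/- Let $p > 1$ and $q < 1$ with $p - q > 0$. Let $0 < v_y \le v_x < 2 v_y$ be real numbers. Then $\big(v_x^{(p-q)/p} - v_y^{(p-q)/p}\big)^p \le \Big(\frac{p-q}{p}\Big)^p \cdot \max(2^{-q}, 1) \cdot \frac{(v_x - v_y)^p}{v_y^{q}}$. -/
/-! By the mean value theorem, `vx^α - vy^α` (with `α = (p-q)/p`) is at most `vx - vy` times a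
bound for the derivative `α t^(α-1) = α (t^(-q))^(1/p)` on `[vy, vx] ⊆ [vy, 2 vy]`, and
`t^(-q) ≤ max (2^(-q)) 1 · vy^(-q)` there; raising to the `p`-th power gives the claim. -/

open Real Set

lemma rpow_sub_rpow_le_of_deriv_le {r C a b : ℝ} (hb : 0 < b) (hba : b ≤ a)
    (hC : ∀ t ∈ Ioo b a, r * t ^ (r - 1) ≤ C) :
    a ^ r - b ^ r ≤ C * (a - b) := by
  have hne : ∀ t ∈ Icc b a, t ≠ 0 := fun t ht => (hb.trans_le ht.1).ne'
  refine (convex_Icc b a).image_sub_le_mul_sub_of_deriv_le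
    (continuousOn_id.rpow_const fun t ht => Or.inl (hne t ht)) ?_ ?_
    b (left_mem_Icc.2 hba) a (right_mem_Icc.2 hba) hba
  · rw [interior_Icc]
    exact fun t ht => (differentiableAt_rpow_const_of_ne r
      (hne t (Ioo_subset_Icc_self ht))).differentiableWithinAt
  · rw [interior_Icc]
    exact fun t ht => (deriv_rpow_const t r).trans_le (hC t ht)

lemma rpow_le_max_two_rpow_one_mul_rpow {s y t : ℝ} (hy : 0 < y) (hyt : y ≤ t)
    (ht : t ≤ 2 * y) : t ^ s ≤ max (2 ^ s) 1 * y ^ s := by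
  rcases le_or_gt 0 s with hs | hs
  · calc t ^ s ≤ (2 * y) ^ s := rpow_le_rpow (hy.le.trans hyt) ht hs
      _ = 2 ^ s * y ^ s := mul_rpow zero_le_two hy.le
      _ ≤ max (2 ^ s) 1 * y ^ s := by gcongr; exact le_max_left _ _
  · calc t ^ s ≤ y ^ s := rpow_le_rpow_of_nonpos hy hyt hs.le
      _ ≤ max (2 ^ s) 1 * y ^ s := le_mul_of_one_le_left (by positivity) (le_max_right _ _)

theorem stmt_4_general (p q : ℝ) (hp : 1 < p) (hpq : 0 < p - q)
    (vx vy : ℝ) (hvy : 0 < vy) (h₁ : vy ≤ vx) (h₂ : vx < 2 * vy) :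
    (vx ^ ((p - q)/p) - vy ^ ((p - q)/p)) ^ p ≤
      ((p - q)/p) ^ p * max (2 ^ (-q)) 1 * ((vx - vy) ^ p / vy ^ q) := by
  have hp0 : 0 < p := one_pos.trans hp
  set α := (p - q) / p
  set M := max ((2 : ℝ) ^ (-q)) 1
  have hα : 0 < α := div_pos hpq hp0
  have hMy : 0 ≤ M * vy ^ (-q) := by positivity
  have hderiv : ∀ t ∈ Ioo vy vx, α * t ^ (α - 1) ≤ α * (M * vy ^ (-q)) ^ p⁻¹ := by
    intro t ht
    have ht0 : 0 ≤ t := hvy.le.trans ht.1.le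
    have hexp : α - 1 = -q * p⁻¹ := by simp only [α]; field_simp; ring
    rw [hexp, rpow_mul ht0]
    gcongr
    exact rpow_le_max_two_rpow_one_mul_rpow hvy ht.1.le (ht.2.trans h₂).le
  have hmvt := rpow_sub_rpow_le_of_deriv_le hvy h₁ hderiv
  have hlhs : 0 ≤ vx ^ α - vy ^ α := sub_nonneg.2 (rpow_le_rpow hvy.le h₁ hα.le)
  calc (vx ^ α - vy ^ α) ^ p
      ≤ (α * (M * vy ^ (-q)) ^ p⁻¹ * (vx - vy)) ^ p := rpow_le_rpow hlhs hmvt hp0.le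
    _ = α ^ p * (M * vy ^ (-q)) * (vx - vy) ^ p := by
        rw [mul_rpow (by positivity) (sub_nonneg.2 h₁), mul_rpow hα.le (by positivity),
          rpow_inv_rpow hMy hp0.ne']
    _ = α ^ p * M * ((vx - vy) ^ p / vy ^ q) := by
        rw [rpow_neg hvy.le]; ring

/-- For `p > 1`, `q < 1`, `0 < v_y ≤ v_x < 2 v_y`:
`(v_x^((p-q)/p) - v_y^((p-q)/p))^p ≤ ((p-q)/p)^p · max (2^(-q)) 1 · (v_x - v_y)^p / v_y^q`. -/
theorem stmt_4 (p q : ℝ) (hp : 1 < p) (hq : q < 1) (hpq : 0 < p - q)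
    (vx vy : ℝ) (hvy : 0 < vy) (h₁ : vy ≤ vx) (h₂ : vx < 2 * vy) :
    (vx ^ ((p - q)/p) - vy ^ ((p - q)/p)) ^ p ≤
      ((p - q)/p) ^ p * max (2 ^ (-q)) 1 * ((vx - vy) ^ p / vy ^ q) :=
  stmt_4_general p q hp hpq vx vy hvy h₁ h₂
end
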